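/- arXiv:1809.02244 — 5 statements merged into one kernel-verified Lean document; each statement's English description precedes it below -/
import Mathlib

section
/- Let S be a binary random variable and X, M, Y random variables on a finite probability space with joint density p, where p(S=s|X=x) > 0 and p(M=m|S=s,X=x) > 0 for all values. Then the inverse-probability-weighted functional E[(1{S=s}/p(S|X)) * (p(M|s',X)/p(M|s,X)) * Y] equals the mediation functional sum over x,m of E[Y | S=s, M=m, X=x] * p(M=m | S=s', X=x) * p(X=x). -/
/-!
Split the sample space into the cells {X = x, M = m}. On the part of a cell where S = s the IPW
weight is the constant p(m | s', x) / (p(s | x) p(m | s, x)), so the cell contributes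
E[Y 1{S = s, M = m, X = x}] times that constant. The chain rule
P(S = s, M = m, X = x) = p(m | s, x) p(s | x) p(x) turns this into E[Y | s, m, x] p(m | s', x) p(x).
-/

open Finset

theorem Fintype.sum_eq_sum_sum_ite_and {Ω α β R : Type*} [Fintype Ω] [Fintype α] [Fintype β]
    [DecidableEq α] [DecidableEq β] [AddCommMonoid R] (f : Ω → R) (g : Ω → α) (h : Ω → β) :
    ∑ ω, f ω = ∑ a, ∑ b, ∑ ω, if g ω = a ∧ h ω = b then f ω else 0 := by
  simp_rw [ite_and, sum_comm (s := (univ : Finset β)), sum_comm (s := (univ : Finset α))]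
  simp

theorem ite_ipw_summand_eq {Ω 𝓧 𝓜 : Type*} [DecidableEq 𝓧] [DecidableEq 𝓜]
    (μ : Ω → ℝ) (Xv : Ω → 𝓧) (Sv : Ω → Bool) (Mv : Ω → 𝓜) (Yv : Ω → ℝ)
    (a : Bool → 𝓧 → ℝ) (r : 𝓜 → 𝓧 → ℝ) (s : Bool) (x : 𝓧) (m : 𝓜) (ω : Ω) :
    (if Xv ω = x ∧ Mv ω = m then
        μ ω * ((if Sv ω = s then (1:ℝ) else 0) / a (Sv ω) (Xv ω)) * r (Mv ω) (Xv ω) * Yv ω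
      else 0)
      = (if Sv ω = s ∧ Mv ω = m ∧ Xv ω = x then μ ω * Yv ω else 0) * (r m x / a s x) := by
  by_cases h : Sv ω = s ∧ Mv ω = m ∧ Xv ω = x
  · obtain ⟨rfl, rfl, rfl⟩ := h
    simp only [and_self, if_true]
    ring
  · grind

theorem stmt0_general
    {Ω 𝓧 𝓜 : Type*} [Fintype Ω] [Fintype 𝓧] [Fintype 𝓜]
    [DecidableEq 𝓧] [DecidableEq 𝓜]
    (μ : Ω → ℝ)
    (Xv : Ω → 𝓧) (Sv : Ω → Bool) (Mv : Ω → 𝓜) (Yv : Ω → ℝ)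
    (s s' : Bool)
    (pX : 𝓧 → ℝ)
    (pSX : Bool → 𝓧 → ℝ)
    (hpSX : ∀ sv x, pSX sv x
      = (∑ ω, if Sv ω = sv ∧ Xv ω = x then μ ω else 0) / pX x)
    (pMSX : 𝓜 → Bool → 𝓧 → ℝ)
    (hpMSX : ∀ m sv x, pMSX m sv x
      = (∑ ω, if Mv ω = m ∧ Sv ω = sv ∧ Xv ω = x then μ ω else 0)
        / (∑ ω, if Sv ω = sv ∧ Xv ω = x then μ ω else 0))
    (condY : Bool → 𝓜 → 𝓧 → ℝ)
    (hcondY : ∀ sv m x, condY sv m x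
      = (∑ ω, if Sv ω = sv ∧ Mv ω = m ∧ Xv ω = x then μ ω * Yv ω else 0)
        / (∑ ω, if Sv ω = sv ∧ Mv ω = m ∧ Xv ω = x then μ ω else 0))
    (hposS : ∀ sv x, 0 < pSX sv x)
    (hposM : ∀ m sv x, 0 < pMSX m sv x) :
    ∑ ω, μ ω * ((if Sv ω = s then (1:ℝ) else 0) / pSX (Sv ω) (Xv ω))
        * (pMSX (Mv ω) s' (Xv ω) / pMSX (Mv ω) s (Xv ω)) * Yv ω
      = ∑ x, ∑ m, condY s m x * pMSX m s' x * pX x := by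
  refine (Fintype.sum_eq_sum_sum_ite_and _ Xv Mv).trans
    (sum_congr rfl fun x _ => sum_congr rfl fun m _ => ?_)
  have hS := (hposS s x).ne'
  have hM := (hposM m s x).ne'
  have hX : pX x ≠ 0 := (div_ne_zero_iff.mp (hpSX s x ▸ hS)).2
  have hjoint : (∑ ω, if Sv ω = s ∧ Mv ω = m ∧ Xv ω = x then μ ω else 0)
      = pMSX m s x * (pSX s x * pX x) := by
    have hSX : (∑ ω, if Sv ω = s ∧ Xv ω = x then μ ω else 0) = pSX s x * pX x :=
      ((eq_div_iff hX).mp (hpSX s x)).symm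
    have hMSX := hpMSX m s x
    rw [hSX, eq_div_iff (mul_ne_zero hS hX)] at hMSX
    rw [hMSX]
    exact sum_congr rfl fun ω _ => if_congr and_left_comm rfl rfl
  rw [sum_congr rfl fun ω _ =>
    ite_ipw_summand_eq μ Xv Sv Mv Yv pSX (fun m x => pMSX m s' x / pMSX m s x) s x m ω,
    ← sum_mul, hcondY, hjoint]
  field_simp

/-- IPW identity for the mediation functional (population version of the
IPW estimator of PSE^{sy}, Theorem 1 of Nabi, Malinsky, Shpitser 2019). -/
theorem stmt0
    {Ω 𝓧 𝓜 : Type*} [Fintype Ω] [Fintype 𝓧] [Fintype 𝓜]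
    [DecidableEq 𝓧] [DecidableEq 𝓜]
    (μ : Ω → ℝ) (hμ : ∀ ω, 0 ≤ μ ω) (hμ1 : ∑ ω, μ ω = 1)
    (Xv : Ω → 𝓧) (Sv : Ω → Bool) (Mv : Ω → 𝓜) (Yv : Ω → ℝ)
    (s s' : Bool)
    (pX : 𝓧 → ℝ) (hpX : ∀ x, pX x = ∑ ω, if Xv ω = x then μ ω else 0)
    (pSX : Bool → 𝓧 → ℝ)
    (hpSX : ∀ sv x, pSX sv x
      = (∑ ω, if Sv ω = sv ∧ Xv ω = x then μ ω else 0) / pX x)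
    (pMSX : 𝓜 → Bool → 𝓧 → ℝ)
    (hpMSX : ∀ m sv x, pMSX m sv x
      = (∑ ω, if Mv ω = m ∧ Sv ω = sv ∧ Xv ω = x then μ ω else 0)
        / (∑ ω, if Sv ω = sv ∧ Xv ω = x then μ ω else 0))
    (condY : Bool → 𝓜 → 𝓧 → ℝ)
    (hcondY : ∀ sv m x, condY sv m x
      = (∑ ω, if Sv ω = sv ∧ Mv ω = m ∧ Xv ω = x then μ ω * Yv ω else 0)
        / (∑ ω, if Sv ω = sv ∧ Mv ω = m ∧ Xv ω = x then μ ω else 0))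
    (hposS : ∀ sv x, 0 < pSX sv x)
    (hposM : ∀ m sv x, 0 < pMSX m sv x) :
    ∑ ω, μ ω * ((if Sv ω = s then (1:ℝ) else 0) / pSX (Sv ω) (Xv ω))
        * (pMSX (Mv ω) s' (Xv ω) / pMSX (Mv ω) s (Xv ω)) * Yv ω
      = ∑ x, ∑ m, condY s m x * pMSX m s' x * pX x :=
  stmt0_general μ Xv Sv Mv Yv s s' pX pSX hpSX pMSX hpMSX condY hcondY hposS hposM
end

section
/- Let S be binary and define PSE^{sy}(p) = sum_{x,m} (E_p[Y|s,m,x] - E_p[Y|s',m,x]) p(m|s',x) p(x). Then PSE^{sy}(p) = E[(1{S=s}/p(S|X)) * (p(M|s',X)/p(M|s,X)) * Y] - E[(1{S=s'}/p(S|X)) * Y], assuming all conditioning events have positive probability. -/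
open Finset

/-! Both sides are sums over the cells `(s, m, x)`. Grouping the inverse-probability-weighted
sums by cell, the chain rule `∑_{cell} μ Y = E[Y | s, m, x] p(m | s, x) p(s | x) p(x)` turns
them into `∑_{x,m} E[Y | s, m, x] p(m | s', x) p(x)` and `∑_{x,m} E[Y | s', m, x] p(m | s', x) p(x)`,
whose difference is the mediation formula. -/

lemma sum_ite_mul_eq_sum_sum_fiber {Ω α β R : Type*} [Fintype Ω] [Fintype α] [Fintype β]
    [DecidableEq α] [DecidableEq β] [NonUnitalNonAssocSemiring R]
    (f : Ω → α) (g : Ω → β) (P : Ω → Prop) [DecidablePred P] (h : β → α → R) (k : Ω → R) :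
    ∑ ω, (if P ω then h (g ω) (f ω) * k ω else 0)
      = ∑ a, ∑ b, h b a * ∑ ω, if P ω ∧ g ω = b ∧ f ω = a then k ω else 0 := by
  simp_rw [mul_sum, mul_ite, mul_zero]
  conv_rhs => enter [2, a]; rw [sum_comm]
  rw [sum_comm]
  refine sum_congr rfl fun ω _ => ?_
  by_cases hP : P ω <;> simp [hP, ite_and]

lemma sum_ipw_eq_sum_sum_fiber {Ω α β σ K : Type*} [Fintype Ω] [Fintype α] [Fintype β]
    [DecidableEq α] [DecidableEq β] [DecidableEq σ] [Field K]
    (μ Y : Ω → K) (f : Ω → α) (S : Ω → σ) (g : Ω → β) (t : σ) (q : σ → α → K)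
    (r : β → α → K) :
    ∑ ω, μ ω * ((if S ω = t then (1 : K) else 0) / q (S ω) (f ω)) * r (g ω) (f ω) * Y ω
      = ∑ a, ∑ b, r b a / q t a * ∑ ω, if S ω = t ∧ g ω = b ∧ f ω = a then μ ω * Y ω else 0 := by
  rw [← sum_ite_mul_eq_sum_sum_fiber f g (S · = t)]
  refine sum_congr rfl fun ω _ => ?_
  split_ifs with hS
  · rw [hS]; ring
  · ring

theorem stmt1_general
    {Ω 𝓧 𝓜 : Type*} [Fintype Ω] [Fintype 𝓧] [Fintype 𝓜]
    [DecidableEq 𝓧] [DecidableEq 𝓜]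
    (μ : Ω → ℝ)
    (Xv : Ω → 𝓧) (Sv : Ω → Bool) (Mv : Ω → 𝓜) (Yv : Ω → ℝ)
    (s s' : Bool)
    (pX : 𝓧 → ℝ)
    (pSX : Bool → 𝓧 → ℝ)
    (hpSX : ∀ sv x, pSX sv x
      = (∑ ω, if Sv ω = sv ∧ Xv ω = x then μ ω else 0) / pX x)
    (pMSX : 𝓜 → Bool → 𝓧 → ℝ)
    (hpMSX : ∀ m sv x, pMSX m sv x
      = (∑ ω, if Mv ω = m ∧ Sv ω = sv ∧ Xv ω = x then μ ω else 0)
        / (∑ ω, if Sv ω = sv ∧ Xv ω = x then μ ω else 0))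
    (condY : Bool → 𝓜 → 𝓧 → ℝ)
    (hcondY : ∀ sv m x, condY sv m x
      = (∑ ω, if Sv ω = sv ∧ Mv ω = m ∧ Xv ω = x then μ ω * Yv ω else 0)
        / (∑ ω, if Sv ω = sv ∧ Mv ω = m ∧ Xv ω = x then μ ω else 0))
    (hposS : ∀ sv x, 0 < pSX sv x)
    (hposM : ∀ m sv x, 0 < pMSX m sv x) :
    ∑ x, ∑ m, (condY s m x - condY s' m x) * pMSX m s' x * pX x
      = (∑ ω, μ ω * ((if Sv ω = s then (1:ℝ) else 0) / pSX (Sv ω) (Xv ω))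
            * (pMSX (Mv ω) s' (Xv ω) / pMSX (Mv ω) s (Xv ω)) * Yv ω)
        - ∑ ω, μ ω * ((if Sv ω = s' then (1:ℝ) else 0) / pSX (Sv ω) (Xv ω)) * Yv ω := by
  have hSX_ne : ∀ sv x, (∑ ω, if Sv ω = sv ∧ Xv ω = x then μ ω else 0) ≠ 0 ∧ pX x ≠ 0 :=
    fun sv x => div_ne_zero_iff.mp (hpSX sv x ▸ (hposS sv x).ne')
  have hMSX_ne : ∀ m sv x, (∑ ω, if Mv ω = m ∧ Sv ω = sv ∧ Xv ω = x then μ ω else 0) ≠ 0 :=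
    fun m sv x => (div_ne_zero_iff.mp (hpMSX m sv x ▸ (hposM m sv x).ne')).1
  have chain_rule : ∀ sv m x,
      (∑ ω, if Sv ω = sv ∧ Mv ω = m ∧ Xv ω = x then μ ω * Yv ω else 0)
        = condY sv m x * pMSX m sv x * pSX sv x * pX x := by
    intro sv m x
    have hcell : (∑ ω, if Sv ω = sv ∧ Mv ω = m ∧ Xv ω = x then μ ω else 0)
        = ∑ ω, if Mv ω = m ∧ Sv ω = sv ∧ Xv ω = x then μ ω else 0 := by
      simp only [and_left_comm]
    rw [hcondY, hpMSX, hpSX, hcell, div_mul_div_cancel₀ (hMSX_ne m sv x),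
      div_mul_div_cancel₀ (hSX_ne sv x).1, div_mul_cancel₀ _ (hSX_ne sv x).2]
  have ipw_s' := sum_ipw_eq_sum_sum_fiber μ Yv Xv Sv Mv s' pSX fun _ _ => 1
  simp only [mul_one] at ipw_s'
  rw [sum_ipw_eq_sum_sum_fiber μ Yv Xv Sv Mv s pSX fun m x => pMSX m s' x / pMSX m s x,
    ipw_s']
  simp only [← sum_sub_distrib]
  refine sum_congr rfl fun x _ => sum_congr rfl fun m _ => ?_
  rw [chain_rule, chain_rule]
  field_simp [(hposM m s x).ne', (hposS s x).ne', (hposS s' x).ne']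

/-- Theorem 1 of Nabi, Malinsky, Shpitser (2019): the path-specific effect
PSE^{sy}, identified by the mediation formula, equals the difference of two
inverse-probability-weighted functionals. -/
theorem stmt1
    {Ω 𝓧 𝓜 : Type*} [Fintype Ω] [Fintype 𝓧] [Fintype 𝓜]
    [DecidableEq 𝓧] [DecidableEq 𝓜]
    (μ : Ω → ℝ) (hμ : ∀ ω, 0 ≤ μ ω) (hμ1 : ∑ ω, μ ω = 1)
    (Xv : Ω → 𝓧) (Sv : Ω → Bool) (Mv : Ω → 𝓜) (Yv : Ω → ℝ)
    (s s' : Bool)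
    (pX : 𝓧 → ℝ) (hpX : ∀ x, pX x = ∑ ω, if Xv ω = x then μ ω else 0)
    (pSX : Bool → 𝓧 → ℝ)
    (hpSX : ∀ sv x, pSX sv x
      = (∑ ω, if Sv ω = sv ∧ Xv ω = x then μ ω else 0) / pX x)
    (pMSX : 𝓜 → Bool → 𝓧 → ℝ)
    (hpMSX : ∀ m sv x, pMSX m sv x
      = (∑ ω, if Mv ω = m ∧ Sv ω = sv ∧ Xv ω = x then μ ω else 0)
        / (∑ ω, if Sv ω = sv ∧ Xv ω = x then μ ω else 0))
    (condY : Bool → 𝓜 → 𝓧 → ℝ)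
    (hcondY : ∀ sv m x, condY sv m x
      = (∑ ω, if Sv ω = sv ∧ Mv ω = m ∧ Xv ω = x then μ ω * Yv ω else 0)
        / (∑ ω, if Sv ω = sv ∧ Mv ω = m ∧ Xv ω = x then μ ω else 0))
    (hposS : ∀ sv x, 0 < pSX sv x)
    (hposM : ∀ m sv x, 0 < pMSX m sv x) :
    ∑ x, ∑ m, (condY s m x - condY s' m x) * pMSX m s' x * pX x
      = (∑ ω, μ ω * ((if Sv ω = s then (1:ℝ) else 0) / pSX (Sv ω) (Xv ω))
            * (pMSX (Mv ω) s' (Xv ω) / pMSX (Mv ω) s (Xv ω)) * Yv ω)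
        - ∑ ω, μ ω * ((if Sv ω = s' then (1:ℝ) else 0) / pSX (Sv ω) (Xv ω)) * Yv ω :=
  stmt1_general μ Xv Sv Mv Yv s s' pX pSX hpSX pMSX hpMSX condY hcondY hposS hposM
end

section
/- Let Z = (X, A, Y) be discrete random variables with p(A=a|X=x) > 0 for all x and a policy f: range(X) -> range(A). Then the IPW identity holds: E[ (1{A = f(X)} / p(A | X)) * Y ] = sum_x p(X=x) E[Y | X=x, A=f(x)]. -/
/-!
Split the weighted sum along the fibres of `X`. On the fibre `X = x` the indicator keeps only
`A = f x`, so the weight is the constant `1 / p(f x | x)` and the fibre contributes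
`∑_{X = x, A = f x} μ Y / p(f x | x)`. Bayes' rule `p(f x | x) = p(x, f x) / p(x)` turns this into
`p(x) E[Y | X = x, A = f x]`.
-/

open Finset

lemma sum_fiber_indicator_div_mul_eq {Ω 𝓧 𝓐 : Type*} [Fintype Ω] [DecidableEq 𝓧]
    [DecidableEq 𝓐] (μ Yv : Ω → ℝ) (Xv : Ω → 𝓧) (Av : Ω → 𝓐) (w : 𝓐 → 𝓧 → ℝ)
    (f : 𝓧 → 𝓐) (x : 𝓧) :
    ∑ ω with Xv ω = x, (if Av ω = f (Xv ω) then (1:ℝ) else 0) / w (Av ω) (Xv ω) * Yv ω * μ ω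
      = (∑ ω, if Xv ω = x ∧ Av ω = f x then μ ω * Yv ω else 0) / w (f x) x := by
  rw [sum_filter, sum_div]
  refine sum_congr rfl fun ω _ => ?_
  by_cases hx : Xv ω = x
  · subst hx
    by_cases ha : Av ω = f (Xv ω)
    · simp only [ha, if_true, and_self]
      ring
    · simp [ha]
  · simp [hx]

theorem stmt6_general
    {Ω 𝓧 𝓐 : Type*} [Fintype Ω] [Fintype 𝓧] [Fintype 𝓐]
    [DecidableEq 𝓧] [DecidableEq 𝓐]
    (μ : Ω → ℝ)
    (Xv : Ω → 𝓧) (Av : Ω → 𝓐) (Yv : Ω → ℝ)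
    (pX : 𝓧 → ℝ)
    (pAX : 𝓐 → 𝓧 → ℝ)
    (hpAX : ∀ a x, pAX a x
      = (∑ ω, if Av ω = a ∧ Xv ω = x then μ ω else 0) / pX x)
    (condY : 𝓧 → 𝓐 → ℝ)
    (hcondY : ∀ x a, condY x a
      = (∑ ω, if Xv ω = x ∧ Av ω = a then μ ω * Yv ω else 0)
        / (∑ ω, if Xv ω = x ∧ Av ω = a then μ ω else 0))
    (f : 𝓧 → 𝓐) :
    ∑ ω, ((if Av ω = f (Xv ω) then (1:ℝ) else 0) / pAX (Av ω) (Xv ω)) * Yv ω * μ ω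
      = ∑ x, pX x * condY x (f x) := by
  rw [← sum_fiberwise univ Xv]
  refine sum_congr rfl fun x _ => ?_
  simp_rw [sum_fiber_indicator_div_mul_eq, hpAX, hcondY, div_div_eq_mul_div, and_comm]
  ring

/-- Single-stage population IPW identity: the inverse-probability-weighted
expectation of the outcome under agreement with policy f equals the
g-formula value of the policy f. -/
theorem stmt6
    {Ω 𝓧 𝓐 : Type*} [Fintype Ω] [Fintype 𝓧] [Fintype 𝓐]
    [DecidableEq 𝓧] [DecidableEq 𝓐]
    (μ : Ω → ℝ) (hμ : ∀ ω, 0 ≤ μ ω) (hμ1 : ∑ ω, μ ω = 1)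
    (Xv : Ω → 𝓧) (Av : Ω → 𝓐) (Yv : Ω → ℝ)
    (pX : 𝓧 → ℝ) (hpX : ∀ x, pX x = ∑ ω, if Xv ω = x then μ ω else 0)
    (pAX : 𝓐 → 𝓧 → ℝ)
    (hpAX : ∀ a x, pAX a x
      = (∑ ω, if Av ω = a ∧ Xv ω = x then μ ω else 0) / pX x)
    (condY : 𝓧 → 𝓐 → ℝ)
    (hcondY : ∀ x a, condY x a
      = (∑ ω, if Xv ω = x ∧ Av ω = a then μ ω * Yv ω else 0)
        / (∑ ω, if Xv ω = x ∧ Av ω = a then μ ω else 0))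
    (hposA : ∀ a x, 0 < pAX a x)
    (f : 𝓧 → 𝓐) :
    ∑ ω, ((if Av ω = f (Xv ω) then (1:ℝ) else 0) / pAX (Av ω) (Xv ω)) * Yv ω * μ ω
      = ∑ x, pX x * condY x (f x) :=
  stmt6_general μ Xv Av Yv pX pAX hpAX condY hcondY f
end

section
/- In the two-stage setting with variables X, A_1, Y_1, A_2, Y_2 and joint distribution factorizing according to the complete DAG in topological order, for policies f_1, f_2 with positivity of propensities pi_1(a_1|x) and pi_2(a_2|x,a_1,y_1), the double product IPW identity holds: E[ (1{A_1=f_1(H_1)}/pi_1(A_1|H_1)) * (1{A_2=f_2(H_2)}/pi_2(A_2|H_2)) * Y_2 ] = E[Y_2(f_1, f_2)], where E[Y_2(f_1,f_2)] is given by the g-formula sum_{x,y_1,y_2} y_2 * p(x) p(y_1 | x, f_1(x)) p(y_2 | x, f_1(x), y_1, f_2(x, f_1(x), y_1)). -/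
/-!
Importance weighting is exact one stage at a time: at the stage-`k` action, the weight
`1{A_k = f_k(H_k)} / π_k(A_k | H_k)` cancels the propensity and collapses the sum over `A_k`
onto the policy's choice `f_k(H_k)`. Peeling off the stages from the outside in turns the
double-IPW expectation into the g-formula.
-/

open Finset

theorem Finset.sum_mul_ite_div_self_mul {α K : Type*} [Fintype α] [DecidableEq α]
    [DivisionSemiring K] (π g : α → K) (a₀ : α) (hπ : π a₀ ≠ 0) :
    ∑ a, π a * ((if a = a₀ then 1 else 0) / π a) * g a = g a₀ := by
  simp [ite_div, hπ]

theorem stmt7_general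
    {𝓧 𝓐₁ 𝓨₁ 𝓐₂ 𝓨₂ : Type*}
    [Fintype 𝓧] [Fintype 𝓐₁] [Fintype 𝓨₁] [Fintype 𝓐₂] [Fintype 𝓨₂]
    [DecidableEq 𝓐₁] [DecidableEq 𝓐₂]
    (y2val : 𝓨₂ → ℝ)
    (pX : 𝓧 → ℝ)
    (π₁ : 𝓐₁ → 𝓧 → ℝ) (hπ₁pos : ∀ a x, 0 < π₁ a x)
    (pY₁ : 𝓨₁ → 𝓧 → 𝓐₁ → ℝ)
    (π₂ : 𝓐₂ → 𝓧 → 𝓐₁ → 𝓨₁ → ℝ) (hπ₂pos : ∀ a₂ x a₁ y₁, 0 < π₂ a₂ x a₁ y₁)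
    (pY₂ : 𝓨₂ → 𝓧 → 𝓐₁ → 𝓨₁ → 𝓐₂ → ℝ)
    (f₁ : 𝓧 → 𝓐₁) (f₂ : 𝓧 → 𝓐₁ → 𝓨₁ → 𝓐₂) :
    ∑ x, ∑ a₁, ∑ y₁, ∑ a₂, ∑ y₂,
        pX x * π₁ a₁ x * pY₁ y₁ x a₁ * π₂ a₂ x a₁ y₁ * pY₂ y₂ x a₁ y₁ a₂
          * ((if a₁ = f₁ x then (1:ℝ) else 0) / π₁ a₁ x)
          * ((if a₂ = f₂ x a₁ y₁ then (1:ℝ) else 0) / π₂ a₂ x a₁ y₁)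
          * y2val y₂
      = ∑ x, ∑ y₁, ∑ y₂,
          y2val y₂ * pX x * pY₁ y₁ x (f₁ x)
            * pY₂ y₂ x (f₁ x) y₁ (f₂ x (f₁ x) y₁) := by
  refine sum_congr rfl fun x _ => ?_
  have nested : ∀ a₁ y₁ a₂ y₂,
      pX x * π₁ a₁ x * pY₁ y₁ x a₁ * π₂ a₂ x a₁ y₁ * pY₂ y₂ x a₁ y₁ a₂
          * ((if a₁ = f₁ x then (1:ℝ) else 0) / π₁ a₁ x)
          * ((if a₂ = f₂ x a₁ y₁ then (1:ℝ) else 0) / π₂ a₂ x a₁ y₁) * y2val y₂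
        = π₁ a₁ x * ((if a₁ = f₁ x then 1 else 0) / π₁ a₁ x)
          * (pX x * pY₁ y₁ x a₁
            * (π₂ a₂ x a₁ y₁ * ((if a₂ = f₂ x a₁ y₁ then 1 else 0) / π₂ a₂ x a₁ y₁)
              * (y2val y₂ * pY₂ y₂ x a₁ y₁ a₂))) := by
    intros; ring
  simp only [nested, ← mul_sum]
  rw [sum_mul_ite_div_self_mul (π₁ · x) _ (f₁ x) (hπ₁pos _ _).ne']
  refine sum_congr rfl fun y₁ _ => ?_
  rw [sum_mul_ite_div_self_mul (π₂ · x (f₁ x) y₁) _ _ (hπ₂pos _ _ _ _).ne', mul_sum]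
  exact sum_congr rfl fun y₂ _ => by ring

/-- Two-stage sequential IPW identity (population version of Eq. (7) for K=2):
the double-product IPW expectation equals the g-formula value E[Y_2(f_1,f_2)]. -/
theorem stmt7
    {𝓧 𝓐₁ 𝓨₁ 𝓐₂ 𝓨₂ : Type*}
    [Fintype 𝓧] [Fintype 𝓐₁] [Fintype 𝓨₁] [Fintype 𝓐₂] [Fintype 𝓨₂]
    [DecidableEq 𝓐₁] [DecidableEq 𝓐₂]
    (y2val : 𝓨₂ → ℝ)
    (pX : 𝓧 → ℝ) (hpX : ∀ x, 0 ≤ pX x) (hpXs : ∑ x, pX x = 1)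
    (π₁ : 𝓐₁ → 𝓧 → ℝ) (hπ₁pos : ∀ a x, 0 < π₁ a x) (hπ₁s : ∀ x, ∑ a, π₁ a x = 1)
    (pY₁ : 𝓨₁ → 𝓧 → 𝓐₁ → ℝ) (hpY₁ : ∀ y x a, 0 ≤ pY₁ y x a)
    (hpY₁s : ∀ x a, ∑ y, pY₁ y x a = 1)
    (π₂ : 𝓐₂ → 𝓧 → 𝓐₁ → 𝓨₁ → ℝ) (hπ₂pos : ∀ a₂ x a₁ y₁, 0 < π₂ a₂ x a₁ y₁)
    (hπ₂s : ∀ x a₁ y₁, ∑ a₂, π₂ a₂ x a₁ y₁ = 1)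
    (pY₂ : 𝓨₂ → 𝓧 → 𝓐₁ → 𝓨₁ → 𝓐₂ → ℝ) (hpY₂ : ∀ y₂ x a₁ y₁ a₂, 0 ≤ pY₂ y₂ x a₁ y₁ a₂)
    (hpY₂s : ∀ x a₁ y₁ a₂, ∑ y₂, pY₂ y₂ x a₁ y₁ a₂ = 1)
    (f₁ : 𝓧 → 𝓐₁) (f₂ : 𝓧 → 𝓐₁ → 𝓨₁ → 𝓐₂) :
    ∑ x, ∑ a₁, ∑ y₁, ∑ a₂, ∑ y₂,
        pX x * π₁ a₁ x * pY₁ y₁ x a₁ * π₂ a₂ x a₁ y₁ * pY₂ y₂ x a₁ y₁ a₂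
          * ((if a₁ = f₁ x then (1:ℝ) else 0) / π₁ a₁ x)
          * ((if a₂ = f₂ x a₁ y₁ then (1:ℝ) else 0) / π₂ a₂ x a₁ y₁)
          * y2val y₂
      = ∑ x, ∑ y₁, ∑ y₂,
          y2val y₂ * pX x * pY₁ y₁ x (f₁ x)
            * pY₂ y₂ x (f₁ x) y₁ (f₂ x (f₁ x) y₁) :=
  stmt7_general y2val pX π₁ hπ₁pos pY₁ π₂ hπ₂pos pY₂ f₁ f₂
end

section
/- Let S be binary, and X, M, A discrete, with joint density p and positivity. Then E[(1{S=s}/p(S|X)) * (p(M|s',X)/p(M|s,X)) * A] - E[(1{S=s'}/p(S|X)) * A] = sum_{x,m} (E[A | S=s, M=m, X=x] - E[A | S=s', M=m, X=x]) p(M=m | S=s', X=x) p(X=x). -/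
open Finset

/-! Both inverse-weighted sums decompose over the cells `{M = m, X = x}`. On the cell with
`S = s`, the chain rule `P(S = s, M = m, X = x) = p(m | s, x) p(s | x) p(x)` turns the mass of
`A` on that cell into `E[A | s, m, x] p(m | s, x) p(s | x) p(x)`, and the weights `1 / p(s | x)` and
`p(m | s', x) / p(m | s, x)` cancel everything except `E[A | s, m, x] p(m | s', x) p(x)`. -/

theorem sum_ite_mul_eq_sum_cells {Ω α β R : Type*} [Fintype Ω] [Fintype α] [Fintype β]
    [DecidableEq α] [DecidableEq β] [Semiring R]
    (P : Ω → Prop) [DecidablePred P] (X : Ω → α) (M : Ω → β) (f : β → α → R) (g : Ω → R) :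
    ∑ ω, (if P ω then f (M ω) (X ω) * g ω else 0)
      = ∑ x, ∑ m, f m x * ∑ ω, if P ω ∧ M ω = m ∧ X ω = x then g ω else 0 := by
  simp only [mul_sum, mul_ite, mul_zero]
  rw [sum_comm, sum_congr rfl fun _ _ => sum_comm, sum_comm]
  refine sum_congr rfl fun ω _ => ?_
  split_ifs with h <;> simp [h, ite_and]

theorem eq_mul_of_ratio_chain {K : Type*} [Field K] {a b c d p q r : K}
    (hp : p = b / a) (hq : q = c / b) (hr : r = d / c) (hp0 : p ≠ 0) (hq0 : q ≠ 0) :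
    d = r * q * p * a := by
  rw [hp, div_ne_zero_iff] at hp0
  rw [hq, div_ne_zero_iff] at hq0
  subst hp hq hr
  field_simp [hp0.1, hp0.2, hq0.1]

theorem stmt9_general
    {Ω 𝓧 𝓜 : Type*} [Fintype Ω] [Fintype 𝓧] [Fintype 𝓜]
    [DecidableEq 𝓧] [DecidableEq 𝓜]
    (μ : Ω → ℝ)
    (Xv : Ω → 𝓧) (Sv : Ω → Bool) (Mv : Ω → 𝓜) (Av : Ω → ℝ)
    (s s' : Bool)
    (pX : 𝓧 → ℝ)
    (pSX : Bool → 𝓧 → ℝ)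
    (hpSX : ∀ sv x, pSX sv x
      = (∑ ω, if Sv ω = sv ∧ Xv ω = x then μ ω else 0) / pX x)
    (pMSX : 𝓜 → Bool → 𝓧 → ℝ)
    (hpMSX : ∀ m sv x, pMSX m sv x
      = (∑ ω, if Mv ω = m ∧ Sv ω = sv ∧ Xv ω = x then μ ω else 0)
        / (∑ ω, if Sv ω = sv ∧ Xv ω = x then μ ω else 0))
    (condA : Bool → 𝓜 → 𝓧 → ℝ)
    (hcondA : ∀ sv m x, condA sv m x
      = (∑ ω, if Sv ω = sv ∧ Mv ω = m ∧ Xv ω = x then μ ω * Av ω else 0)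
        / (∑ ω, if Sv ω = sv ∧ Mv ω = m ∧ Xv ω = x then μ ω else 0))
    (hposS : ∀ sv x, 0 < pSX sv x)
    (hposM : ∀ m sv x, 0 < pMSX m sv x) :
    (∑ ω, μ ω * ((if Sv ω = s then (1:ℝ) else 0) / pSX (Sv ω) (Xv ω))
        * (pMSX (Mv ω) s' (Xv ω) / pMSX (Mv ω) s (Xv ω)) * Av ω)
      - (∑ ω, μ ω * ((if Sv ω = s' then (1:ℝ) else 0) / pSX (Sv ω) (Xv ω)) * Av ω)
      = ∑ x, ∑ m, (condA s m x - condA s' m x) * pMSX m s' x * pX x := by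
  have chain_rule : ∀ sv m x,
      (∑ ω, if Sv ω = sv ∧ Mv ω = m ∧ Xv ω = x then μ ω * Av ω else 0)
        = condA sv m x * pMSX m sv x * pSX sv x * pX x := fun sv m x =>
    eq_mul_of_ratio_chain (hpSX sv x) (by simpa only [and_left_comm] using hpMSX m sv x)
      (hcondA sv m x) (hposS sv x).ne' (hposM m sv x).ne'
  have weight_s : ∀ ω, μ ω * ((if Sv ω = s then (1:ℝ) else 0) / pSX (Sv ω) (Xv ω))
        * (pMSX (Mv ω) s' (Xv ω) / pMSX (Mv ω) s (Xv ω)) * Av ω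
      = if Sv ω = s then pMSX (Mv ω) s' (Xv ω) / (pSX s (Xv ω) * pMSX (Mv ω) s (Xv ω))
          * (μ ω * Av ω) else 0 := fun ω => by
    split_ifs with h <;> simp [h, field]
  have weight_s' : ∀ ω, μ ω * ((if Sv ω = s' then (1:ℝ) else 0) / pSX (Sv ω) (Xv ω)) * Av ω
      = if Sv ω = s' then 1 / pSX s' (Xv ω) * (μ ω * Av ω) else 0 := fun ω => by
    split_ifs with h <;> simp [h, field]
  simp only [weight_s, weight_s']
  rw [sum_ite_mul_eq_sum_cells _ Xv Mv (fun m x => pMSX m s' x / (pSX s x * pMSX m s x)),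
    sum_ite_mul_eq_sum_cells _ Xv Mv (fun _ x => 1 / pSX s' x)]
  simp only [chain_rule, ← sum_sub_distrib]
  refine sum_congr rfl fun x _ => sum_congr rfl fun m _ => ?_
  field_simp [(hposS s x).ne', (hposS s' x).ne', (hposM m s x).ne']

/-- The PSE^{sa} identity of Theorem 1 of Nabi, Malinsky, Shpitser (2019),
applied to a real-valued decision variable A in place of the outcome Y. -/
theorem stmt9
    {Ω 𝓧 𝓜 : Type*} [Fintype Ω] [Fintype 𝓧] [Fintype 𝓜]
    [DecidableEq 𝓧] [DecidableEq 𝓜]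
    (μ : Ω → ℝ) (hμ : ∀ ω, 0 ≤ μ ω) (hμ1 : ∑ ω, μ ω = 1)
    (Xv : Ω → 𝓧) (Sv : Ω → Bool) (Mv : Ω → 𝓜) (Av : Ω → ℝ)
    (s s' : Bool)
    (pX : 𝓧 → ℝ) (hpX : ∀ x, pX x = ∑ ω, if Xv ω = x then μ ω else 0)
    (pSX : Bool → 𝓧 → ℝ)
    (hpSX : ∀ sv x, pSX sv x
      = (∑ ω, if Sv ω = sv ∧ Xv ω = x then μ ω else 0) / pX x)
    (pMSX : 𝓜 → Bool → 𝓧 → ℝ)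
    (hpMSX : ∀ m sv x, pMSX m sv x
      = (∑ ω, if Mv ω = m ∧ Sv ω = sv ∧ Xv ω = x then μ ω else 0)
        / (∑ ω, if Sv ω = sv ∧ Xv ω = x then μ ω else 0))
    (condA : Bool → 𝓜 → 𝓧 → ℝ)
    (hcondA : ∀ sv m x, condA sv m x
      = (∑ ω, if Sv ω = sv ∧ Mv ω = m ∧ Xv ω = x then μ ω * Av ω else 0)
        / (∑ ω, if Sv ω = sv ∧ Mv ω = m ∧ Xv ω = x then μ ω else 0))
    (hposS : ∀ sv x, 0 < pSX sv x)
    (hposM : ∀ m sv x, 0 < pMSX m sv x) :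
    (∑ ω, μ ω * ((if Sv ω = s then (1:ℝ) else 0) / pSX (Sv ω) (Xv ω))
        * (pMSX (Mv ω) s' (Xv ω) / pMSX (Mv ω) s (Xv ω)) * Av ω)
      - (∑ ω, μ ω * ((if Sv ω = s' then (1:ℝ) else 0) / pSX (Sv ω) (Xv ω)) * Av ω)
      = ∑ x, ∑ m, (condA s m x - condA s' m x) * pMSX m s' x * pX x :=
  stmt9_general μ Xv Sv Mv Av s s' pX pSX hpSX pMSX hpMSX condA hcondA hposS hposM
end
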